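/- arXiv:2508.17077 — 2 statements merged into one kernel-verified Lean document; each statement's English description precedes it below -/
import Mathlib

section
/- Let (S_1, ..., S_B, S_{B+1}) be exchangeable real-valued random variables. Let t be the ⌈(1-α)(B+1)⌉-th smallest value among S_1, ..., S_B (with t = +∞ if ⌈(1-α)(B+1)⌉ > B). Then P(S_{B+1} ≤ t) ≥ 1 - α. -/
/-! Let `R j` be the number of scores strictly below `S j`, and `k = ⌈(1-α)(B+1)⌉ ≤ B + 1`.
The event `S_{B+1} ≤ t` is exactly `R (B+1) < k`. For every outcome at least `k` of the `B + 1`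
indices satisfy `R j < k`, and by exchangeability all the events `R j < k` have the same
probability, so `(B+1) · P(R (B+1) < k) ≥ k ≥ (1-α)(B+1)`. -/

open MeasureTheory ProbabilityTheory Finset

/-- The `k`-th smallest value among `v 0, …, v (B-1)`, as an extended real:
it is the infimum of all `x` such that at least `k` of the values are `≤ x`
(equal to `+∞` when `k > B`, since then no such `x` exists). -/
noncomputable def kthSmallest {B : ℕ} (v : Fin B → ℝ) (k : ℕ) : EReal :=
  open Classical in
  sInf {x : EReal | k ≤ (Finset.univ.filter (fun i => (v i : EReal) ≤ x)).card}

section StrictRank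

variable {ι α : Type*} [Fintype ι] [LinearOrder α]

def strictRank (v : ι → α) (j : ι) : ℕ := #{i | v i < v j}

lemma strictRank_comp_perm (v : ι → α) (σ : Equiv.Perm ι) (j : ι) :
    strictRank (v ∘ σ) j = strictRank v (σ j) :=
  Finset.card_equiv σ (by simp)

lemma le_card_strictRank_lt {k : ℕ} (hk : k ≤ Fintype.card ι) (v : ι → α) :
    k ≤ #{j | strictRank v j < k} := by
  classical
  by_contra! hT
  set T : Finset ι := {j | strictRank v j < k}
  have hne : Tᶜ.Nonempty := by
    rw [← card_pos, card_compl]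
    omega
  -- A coordinate outside `T` with the least value has only elements of `T` below it.
  obtain ⟨j, hjT, hmin⟩ := Tᶜ.exists_min_image v hne
  have hbelow : strictRank v j ≤ #T := card_le_card fun i hi => by
    by_contra hiT
    exact (mem_filter.mp hi).2.not_ge (hmin i (mem_compl.mpr hiT))
  exact mem_compl.mp hjT (mem_filter.mpr ⟨mem_univ j, hbelow.trans_lt hT⟩)

lemma strictRank_last {n : ℕ} (v : Fin (n + 1) → α) :
    strictRank v (Fin.last n) = #{i : Fin n | v i.castSucc < v (Fin.last n)} := by
  simp only [strictRank, card_filter, Fin.sum_univ_castSucc, lt_irrefl, if_false, add_zero]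

end StrictRank

lemma coe_le_kthSmallest_iff {B : ℕ} (v : Fin B → ℝ) (k : ℕ) (y : ℝ) :
    (y : EReal) ≤ kthSmallest v k ↔ #{i | v i < y} < k := by
  unfold kthSmallest
  constructor
  · intro hy
    by_contra! hk
    -- The largest value below `y` (or `⊥`) already has `k` values at or below it.
    set x : EReal := ({i | v i < y} : Finset (Fin B)).sup fun i => (v i : EReal)
    have hxy : x < y := (Finset.sup_lt_iff (EReal.bot_lt_coe y)).mpr fun i hi =>
      EReal.coe_lt_coe_iff.mpr (mem_filter.mp hi).2
    refine (hy.trans (sInf_le ?_)).not_gt hxy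
    exact hk.trans <| card_le_card fun i hi =>
      mem_filter.mpr ⟨mem_univ i, le_sup (f := fun i => (v i : EReal)) hi⟩
  · intro hk
    refine le_sInf fun x hx => ?_
    by_contra! hxy
    have hx : k ≤ _ := hx
    refine hx.not_gt (hk.trans_le' (card_le_card fun i hi => mem_filter.mpr ⟨mem_univ i, ?_⟩))
    exact EReal.coe_lt_coe_iff.mp ((mem_filter.mp hi).2.trans_lt hxy)

lemma coe_last_le_kthSmallest_iff {B : ℕ} (v : Fin (B + 1) → ℝ) (k : ℕ) :
    (v (Fin.last B) : EReal) ≤ kthSmallest (fun i : Fin B => v i.castSucc) k ↔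
      strictRank v (Fin.last B) < k := by
  rw [coe_le_kthSmallest_iff, strictRank_last]

section Exchangeable

variable {Ω ι α : Type*} [MeasurableSpace Ω] [Fintype ι] [MeasurableSpace α]

def Exchangeable (P : Measure Ω) (X : Ω → ι → α) : Prop :=
  ∀ σ : Equiv.Perm ι, P.map (fun ω => X ω ∘ σ) = P.map X

variable [TopologicalSpace α] [LinearOrder α] [OrderClosedTopology α] [OpensMeasurableSpace α]
  [SecondCountableTopology α]

lemma measurableSet_strictRank_lt (j : ι) (k : ℕ) :
    MeasurableSet {v : ι → α | strictRank v j < k} := by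
  have hrank : Measurable fun v : ι → α => strictRank v j := by
    simp only [strictRank, card_filter]
    exact Finset.measurable_sum _ fun i _ => Measurable.ite
      (measurableSet_lt (measurable_pi_apply i) (measurable_pi_apply j)) measurable_const
      measurable_const
  exact hrank measurableSet_Iio

variable {P : Measure Ω} {X : Ω → ι → α}

lemma Exchangeable.measure_strictRank_lt_eq (hexch : Exchangeable P X) (hX : Measurable X)
    (k : ℕ) (i j : ι) :
    P {ω | strictRank (X ω) i < k} = P {ω | strictRank (X ω) j < k} := by
  classical
  set σ := Equiv.swap i j
  have hXσ : Measurable fun ω => X ω ∘ σ :=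
    measurable_pi_lambda _ fun l => (measurable_pi_apply (σ l)).comp hX
  have hA := measurableSet_strictRank_lt (α := α) j k
  calc P {ω | strictRank (X ω) i < k}
      = P ((fun ω => X ω ∘ σ) ⁻¹' {v | strictRank v j < k}) := by
        simp only [Set.preimage_ofPred_eq, strictRank_comp_perm, σ, Equiv.swap_apply_right]
    _ = P.map X {v | strictRank v j < k} := by rw [← hexch σ, Measure.map_apply hXσ hA]
    _ = P {ω | strictRank (X ω) j < k} := Measure.map_apply hX hA

lemma Exchangeable.le_card_mul_measure_strictRank_lt (hexch : Exchangeable P X)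
    (hX : Measurable X) {k : ℕ} (hk : k ≤ Fintype.card ι) (j : ι) :
    k * P Set.univ ≤ Fintype.card ι * P {ω | strictRank (X ω) j < k} := by
  have hA (i : ι) : MeasurableSet {ω | strictRank (X ω) i < k} :=
    hX (measurableSet_strictRank_lt i k)
  calc (k : ENNReal) * P Set.univ = ∫⁻ _, (k : ENNReal) ∂P := (lintegral_const _).symm
    _ ≤ ∫⁻ ω, ∑ i, {ω | strictRank (X ω) i < k}.indicator 1 ω ∂P :=
        lintegral_mono fun ω => by
          simpa [Set.indicator_apply, sum_boole] using le_card_strictRank_lt hk (X ω)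
    _ = ∑ i, P {ω | strictRank (X ω) i < k} := by
        rw [lintegral_finsetSum _ fun i _ => measurable_one.indicator (hA i)]
        exact sum_congr rfl fun i _ => lintegral_indicator_one (hA i)
    _ = Fintype.card ι * P {ω | strictRank (X ω) j < k} := by
        simp [hexch.measure_strictRank_lt_eq hX k _ j]

end Exchangeable

/-- **Split-conformal coverage lemma.** If `S 0, …, S B` are exchangeable real-valued
random variables and `t` is the `⌈(1-α)(B+1)⌉`-th smallest value among the first `B`
of them (`+∞` if `⌈(1-α)(B+1)⌉ > B`), then `P(S_{B+1} ≤ t) ≥ 1 - α`. -/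
theorem conformal_marginal_coverage
    {Ω : Type*} [MeasurableSpace Ω] (P : Measure Ω) [IsProbabilityMeasure P]
    (B : ℕ) (α : ℝ) (hα : α ∈ Set.Ioo (0 : ℝ) 1)
    (S : Fin (B + 1) → Ω → ℝ) (hSmeas : ∀ i, Measurable (S i))
    (hexch : ∀ σ : Equiv.Perm (Fin (B + 1)),
      P.map (fun ω => fun i => S (σ i) ω) = P.map (fun ω => fun i => S i ω)) :
    1 - α ≤
      (P {ω | (S (Fin.last B) ω : EReal) ≤
        kthSmallest (fun i : Fin B => S i.castSucc ω)
          ⌈(1 - α) * (B + 1)⌉₊}).toReal := by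
  set k := ⌈(1 - α) * (B + 1)⌉₊
  have hk : k ≤ B + 1 := Nat.ceil_le.mpr (by push_cast; nlinarith [hα.1])
  have hexch' : Exchangeable P fun ω i => S i ω := hexch
  have hcount := hexch'.le_card_mul_measure_strictRank_lt (measurable_pi_lambda _ hSmeas)
    (by simpa using hk) (Fin.last B)
  simp only [measure_univ, mul_one, Fintype.card_fin] at hcount
  have hevent :
      {ω | (S (Fin.last B) ω : EReal) ≤ kthSmallest (fun i : Fin B => S i.castSucc ω) k}
        = {ω | strictRank (fun i => S i ω) (Fin.last B) < k} :=
    Set.ext fun ω => coe_last_le_kthSmallest_iff (fun i => S i ω) k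
  rw [hevent]
  set p := P {ω | strictRank (fun i => S i ω) (Fin.last B) < k}
  have hkp : (k : ℝ) ≤ (B + 1) * p.toReal := by
    simpa [ENNReal.toReal_add] using ENNReal.toReal_mono (by finiteness) hcount
  have hceil : (1 - α) * (B + 1) ≤ k := Nat.le_ceil _
  nlinarith
end

section
/- Let {A_1, ..., A_J} be a fixed measurable partition of the feature space 𝒳, and suppose the calibration pairs {(θ_i, X_i)}_{i=1}^B and the test pair (θ, X) are i.i.d. For x ∈ A_j, let t(x) be the ⌈(1-α)(n_j+1)⌉-th smallest calibration score among {s(θ_i; X_i) : X_i ∈ A_j}, where n_j = #{i : X_i ∈ A_j}, and define C(x) = {θ : s(θ; x) ≤ t(x)}. Then for each j with P(X ∈ A_j) > 0, P(θ ∈ C(X) | X ∈ A_j) ≥ 1 - α. -/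
/-!
Add the test pair to the calibration sample as a last point. Call a point of the full sample
covered when it lies in the cell and its score is among the `⌈(1 - α) m⌉` smallest of the `m`
scores in the cell, its own included. For the test point this is exactly the event
`X ∈ A j ∧ s(θ; X) ≤ t(X)`. Whatever the sample, at least `⌈(1 - α) m⌉` points are covered, and
by exchangeability every point is covered with the same probability; taking expectations,
`(B + 1) P(test point covered) ≥ (1 - α) E[m] = (1 - α) (B + 1) P(X ∈ A j)`.
-/

open MeasureTheory ProbabilityTheory Finset

/-- The `⌈(1-α)(n+1)⌉`-th smallest score among the calibration points whose feature
falls into the given cell `Aj`, as an extended real (`+∞` when there are not enough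
points). Here `n` is the number of calibration points in the cell. -/
noncomputable def localThreshold {Ω 𝒯 𝒳 : Type*} {B : ℕ}
    (θ : Fin B → Ω → 𝒯) (X : Fin B → Ω → 𝒳) (s : 𝒯 → 𝒳 → ℝ)
    (Aj : Set 𝒳) (α : ℝ) (ω : Ω) : EReal :=
  open Classical in
  sInf {x : EReal |
    ⌈(1 - α) * ((Finset.univ.filter (fun i : Fin B => X i ω ∈ Aj)).card + 1)⌉₊ ≤
      (Finset.univ.filter
        (fun i : Fin B => X i ω ∈ Aj ∧ (s (θ i ω) (X i ω) : EReal) ≤ x)).card}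

open scoped ENNReal

section Ranks

variable {ι β : Type*} [LinearOrder β]

lemma le_card_filter_card_filter_lt_lt (T : Finset ι) (v : ι → β) {k : ℕ}
    (hk : k ≤ #T) : k ≤ #{i ∈ T | #{l ∈ T | v l < v i} < k} := by
  set bad := {i ∈ T | k ≤ #{l ∈ T | v l < v i}}
  rcases bad.eq_empty_or_nonempty with hbad | hbad
  · refine hk.trans (card_le_card fun i hi => mem_filter.2 ⟨hi, ?_⟩)
    by_contra h
    exact notMem_empty i (hbad ▸ mem_filter.2 ⟨hi, not_lt.1 h⟩)
  · -- everything strictly below the lowest bad element is good, and there are at least `k` such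
    obtain ⟨i₀, hi₀, hmin⟩ := bad.exists_min_image v hbad
    refine (mem_filter.1 hi₀).2.trans (card_le_card fun l hl => ?_)
    obtain ⟨hlT, hlv⟩ := mem_filter.1 hl
    refine mem_filter.2 ⟨hlT, ?_⟩
    by_contra h
    exact (hmin l (mem_filter.2 ⟨hlT, not_lt.1 h⟩)).not_gt hlv

variable [Fintype ι]

lemma coe_le_sInf_iff_card_filter_lt (c : ι → Prop) [DecidablePred c] (g : ι → ℝ) (S : ℝ)
    (k : ℕ) :
    (S : EReal) ≤ sInf {x : EReal | k ≤ #{i | c i ∧ (g i : EReal) ≤ x}} ↔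
      #{i | c i ∧ g i < S} < k := by
  constructor
  · intro hS
    by_contra! hk
    set T : Finset ι := {i | c i ∧ g i < S}
    have hsup : T.sup (fun i => (g i : EReal)) < S :=
      (Finset.sup_lt_iff (EReal.bot_lt_coe S)).2 fun i hi =>
        EReal.coe_lt_coe_iff.2 (mem_filter.1 hi).2.2
    have hmem : k ≤ #{i | c i ∧ (g i : EReal) ≤ T.sup (fun i => (g i : EReal))} :=
      hk.trans (card_le_card fun i hi => mem_filter.2
        ⟨mem_univ i, (mem_filter.1 hi).2.1, le_sup (f := fun i => (g i : EReal)) hi⟩)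
    exact (hS.trans (sInf_le hmem)).not_gt hsup
  · intro hk
    refine le_sInf fun x hx => ?_
    by_contra! hxS
    refine (hx.trans (card_le_card fun i hi => ?_)).not_gt hk
    obtain ⟨hci, hgi⟩ := (mem_filter.1 hi).2
    exact mem_filter.2 ⟨mem_univ i, hci, EReal.coe_lt_coe_iff.1 (hgi.trans_lt hxS)⟩

end Ranks

section CellRanks

open Classical

variable {ι W : Type*} [Fintype ι]

noncomputable def cellCount (C : Set W) (y : ι → W) : ℕ := #{i | y i ∈ C}

noncomputable def cellRank (C : Set W) (f : W → ℝ) (y : ι → W) (i : ι) : ℕ :=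
  #{l | y l ∈ C ∧ f (y l) < f (y i)}

def cellCoverageEvent (C : Set W) (f : W → ℝ) (α : ℝ) (i : ι) : Set (ι → W) :=
  {y | y i ∈ C ∧ cellRank C f y i < ⌈(1 - α) * cellCount C y⌉₊}

lemma ceil_le_card_filter_mem_cellCoverageEvent (C : Set W) (f : W → ℝ) {α : ℝ} (hα : 0 ≤ α)
    (y : ι → W) :
    ⌈(1 - α) * cellCount C y⌉₊ ≤ #{i | y ∈ cellCoverageEvent C f α i} := by
  set T : Finset ι := {i | y i ∈ C}
  have hk : ⌈(1 - α) * #T⌉₊ ≤ #T := by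
    rw [Nat.ceil_le]
    nlinarith [(#T).cast_nonneg (α := ℝ)]
  refine (le_card_filter_card_filter_lt_lt T (fun i => f (y i)) hk).trans
    (card_le_card fun i hi => ?_)
  obtain ⟨hiT, hrank⟩ := mem_filter.1 hi
  refine mem_filter.2 ⟨mem_univ i, (mem_filter.1 hiT).2, ?_⟩
  simpa only [cellRank, cellCount, T, filter_filter] using hrank

lemma comp_perm_mem_cellCoverageEvent_iff (C : Set W) (f : W → ℝ) (α : ℝ) (e : Equiv.Perm ι)
    (y : ι → W) (i : ι) :
    y ∘ e ∈ cellCoverageEvent C f α i ↔ y ∈ cellCoverageEvent C f α (e i) := by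
  have hcount : cellCount C (y ∘ e) = cellCount C y :=
    card_equiv e fun i => by simp
  have hrank : cellRank C f (y ∘ e) i = cellRank C f y (e i) :=
    card_equiv e fun i => by simp
  simp only [cellCoverageEvent, Set.mem_ofPred_eq, hcount, hrank, Function.comp_apply]

lemma mem_cellCoverageEvent_last_iff (C : Set W) (f : W → ℝ) (α : ℝ) {n : ℕ}
    (y : Fin (n + 1) → W) :
    y ∈ cellCoverageEvent C f α (Fin.last n) ↔ y (Fin.last n) ∈ C ∧
      #{i : Fin n | y i.castSucc ∈ C ∧ f (y i.castSucc) < f (y (Fin.last n))} <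
        ⌈(1 - α) * (#{i : Fin n | y i.castSucc ∈ C} + 1)⌉₊ := by
  refine and_congr_right fun hlast => ?_
  have hcount : cellCount C y = #{i : Fin n | y i.castSucc ∈ C} + 1 := by
    rw [cellCount, card_filter, Fin.sum_univ_castSucc, ← card_filter, if_pos hlast]
  have hrank : cellRank C f y (Fin.last n) =
      #{i : Fin n | y i.castSucc ∈ C ∧ f (y i.castSucc) < f (y (Fin.last n))} := by
    rw [cellRank, card_filter, Fin.sum_univ_castSucc, ← card_filter, if_neg (by simp)]
    rfl
  rw [hcount, hrank, Nat.cast_succ]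

lemma ofReal_mul_cellCount_le_card (C : Set W) (f : W → ℝ) {α : ℝ} (hα : 0 ≤ α) (y : ι → W) :
    ENNReal.ofReal (1 - α) * cellCount C y ≤ #{i | y ∈ cellCoverageEvent C f α i} := by
  rw [← ENNReal.ofReal_natCast, ← ENNReal.ofReal_mul' (Nat.cast_nonneg _),
    ← ENNReal.ofReal_natCast]
  exact ENNReal.ofReal_le_ofReal
    (Nat.ceil_le.1 (ceil_le_card_filter_mem_cellCoverageEvent C f hα y))

variable [MeasurableSpace W]

lemma measurable_cellCount {C : Set W} (hC : MeasurableSet C) :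
    Measurable fun y : ι → W => cellCount C y := by
  simp only [cellCount, card_filter]
  exact Finset.measurable_sum _ fun i _ =>
    Measurable.ite (measurable_pi_apply i hC) measurable_const measurable_const

lemma measurable_cellRank {C : Set W} (hC : MeasurableSet C) {f : W → ℝ} (hf : Measurable f)
    (i : ι) : Measurable fun y : ι → W => cellRank C f y i := by
  simp only [cellRank, card_filter]
  exact Finset.measurable_sum _ fun l _ => Measurable.ite
    ((measurable_pi_apply l hC).inter (measurableSet_lt (hf.comp (measurable_pi_apply l))
      (hf.comp (measurable_pi_apply i)))) measurable_const measurable_const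

lemma measurableSet_cellCoverageEvent {C : Set W} (hC : MeasurableSet C) {f : W → ℝ}
    (hf : Measurable f) (α : ℝ) (i : ι) : MeasurableSet (cellCoverageEvent C f α i) :=
  (measurable_pi_apply i hC).inter <|
    measurableSet_lt (measurable_cellRank hC hf i)
      ((measurable_from_nat (f := fun m : ℕ => ⌈(1 - α) * m⌉₊)).comp (measurable_cellCount hC))

end CellRanks

section Exchangeability

variable {ι W : Type*} [Fintype ι] [MeasurableSpace W]

lemma measurePreserving_comp_perm (ν : Measure W) [SigmaFinite ν] (e : Equiv.Perm ι) :
    MeasurePreserving (fun y : ι → W => y ∘ e) (Measure.pi fun _ => ν)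
      (Measure.pi fun _ => ν) := by
  convert measurePreserving_piCongrLeft (fun _ : ι => ν) e.symm using 1
  ext y i
  simpa using
    (MeasurableEquiv.piCongrLeft_apply_apply (β := fun _ : ι => W) e.symm y (e i)).symm

open Classical in
lemma lintegral_card_filter_mem {Ω : Type*} [MeasurableSpace Ω] (μ : Measure Ω)
    {G : ι → Set Ω} (hG : ∀ i, MeasurableSet (G i)) :
    ∫⁻ y, (#{i | y ∈ G i} : ℝ≥0∞) ∂μ = ∑ i, μ (G i) := by
  calc ∫⁻ y, (#{i | y ∈ G i} : ℝ≥0∞) ∂μ = ∫⁻ y, ∑ i, (G i).indicator 1 y ∂μ := by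
        simp only [card_filter, Nat.cast_sum, Nat.cast_ite, Nat.cast_one, Nat.cast_zero,
          Set.indicator_apply, Pi.one_apply]
    _ = ∑ i, ∫⁻ y, (G i).indicator 1 y ∂μ :=
        lintegral_finsetSum _ fun i _ => measurable_const.indicator (hG i)
    _ = ∑ i, μ (G i) := by simp_rw [lintegral_indicator_one (hG _)]

end Exchangeability

section ProductCoverage

open Classical

variable {ι W : Type*} [Fintype ι] [MeasurableSpace W]

lemma pi_cellCoverageEvent_eq (ν : Measure W) [SigmaFinite ν] {C : Set W}
    (hC : MeasurableSet C) {f : W → ℝ} (hf : Measurable f) (α : ℝ) (i j : ι) :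
    Measure.pi (fun _ => ν) (cellCoverageEvent C f α i) =
      Measure.pi (fun _ => ν) (cellCoverageEvent C f α j) := by
  have hpre : (fun y : ι → W => y ∘ Equiv.swap i j) ⁻¹' cellCoverageEvent C f α j =
      cellCoverageEvent C f α i := by
    ext y
    rw [Set.mem_preimage, comp_perm_mem_cellCoverageEvent_iff, Equiv.swap_apply_right]
  rw [← hpre, (measurePreserving_comp_perm ν _).measure_preimage
    (measurableSet_cellCoverageEvent hC hf α j).nullMeasurableSet]

lemma lintegral_cellCount (ν : Measure W) [IsProbabilityMeasure ν] {C : Set W}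
    (hC : MeasurableSet C) :
    ∫⁻ y, (cellCount C y : ℝ≥0∞) ∂Measure.pi (fun _ : ι => ν) = Fintype.card ι * ν C := by
  calc ∫⁻ y, (cellCount C y : ℝ≥0∞) ∂Measure.pi (fun _ : ι => ν)
      = ∑ i, Measure.pi (fun _ : ι => ν) (Function.eval i ⁻¹' C) :=
        lintegral_card_filter_mem _ fun i => measurable_pi_apply i hC
    _ = Fintype.card ι * ν C := by
        simp [(measurePreserving_eval (fun _ : ι => ν) _).measure_preimage hC.nullMeasurableSet]

theorem ofReal_mul_le_pi_cellCoverageEvent (ν : Measure W) [IsProbabilityMeasure ν]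
    {C : Set W} (hC : MeasurableSet C) {f : W → ℝ} (hf : Measurable f) {α : ℝ} (hα : 0 ≤ α)
    (i : ι) :
    ENNReal.ofReal (1 - α) * ν C ≤ Measure.pi (fun _ => ν) (cellCoverageEvent C f α i) := by
  set μ := Measure.pi fun _ : ι => ν
  have : Nonempty ι := ⟨i⟩
  have hcard : (Fintype.card ι : ℝ≥0∞) ≠ 0 := Nat.cast_ne_zero.2 Fintype.card_ne_zero
  refine (ENNReal.mul_le_mul_iff_right hcard (ENNReal.natCast_ne_top _)).1 ?_
  calc (Fintype.card ι : ℝ≥0∞) * (ENNReal.ofReal (1 - α) * ν C)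
      = ENNReal.ofReal (1 - α) * ∫⁻ y, (cellCount C y : ℝ≥0∞) ∂μ := by
        rw [lintegral_cellCount ν hC]; ring
    _ = ∫⁻ y, ENNReal.ofReal (1 - α) * cellCount C y ∂μ :=
        (lintegral_const_mul _ (measurable_from_top.comp (measurable_cellCount hC))).symm
    _ ≤ ∫⁻ y, (#{k | y ∈ cellCoverageEvent C f α k} : ℝ≥0∞) ∂μ :=
        lintegral_mono (ofReal_mul_cellCount_le_card C f hα)
    _ = ∑ k, μ (cellCoverageEvent C f α k) :=
        lintegral_card_filter_mem μ fun k => measurableSet_cellCoverageEvent hC hf α k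
    _ = Fintype.card ι * μ (cellCoverageEvent C f α i) := by
        simp [pi_cellCoverageEvent_eq ν hC hf α _ i, μ]

end ProductCoverage

lemma le_toReal_cond_of_ofReal_mul_le {Ω : Type*} [MeasurableSpace Ω] {P : Measure Ω}
    [IsFiniteMeasure P] {E S : Set Ω} (hE : MeasurableSet E) (hPE : P E ≠ 0) {c : ℝ}
    (h : ENNReal.ofReal c * P E ≤ P (E ∩ S)) : c ≤ (P[|E] S).toReal := by
  refine (ENNReal.ofReal_le_iff_le_toReal (measure_ne_top _ _)).1 ?_
  rwa [cond_apply hE, mul_comm, ← div_eq_mul_inv,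
    ENNReal.le_div_iff_mul_le (.inl hPE) (.inl (measure_ne_top _ _))]

open Classical in
lemma coe_le_localThreshold_iff {Ω 𝒯 𝒳 : Type*} {B : ℕ} (θ : Fin B → Ω → 𝒯)
    (X : Fin B → Ω → 𝒳) (s : 𝒯 → 𝒳 → ℝ) (Aj : Set 𝒳) (α : ℝ) (ω : Ω) (S : ℝ) :
    (S : EReal) ≤ localThreshold θ X s Aj α ω ↔
      #{i | X i ω ∈ Aj ∧ s (θ i ω) (X i ω) < S} <
        ⌈(1 - α) * (#{i | X i ω ∈ Aj} + 1)⌉₊ :=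
  coe_le_sInf_iff_card_filter_lt _ _ S _

theorem local_conformal_coverage_general
    {Ω 𝒯 𝒳 : Type*} [MeasurableSpace Ω] [MeasurableSpace 𝒯] [MeasurableSpace 𝒳]
    (P : Measure Ω) [IsProbabilityMeasure P]
    (B J : ℕ) (α : ℝ) (hα : α ∈ Set.Ioo (0 : ℝ) 1)
    (θ : Fin (B + 1) → Ω → 𝒯) (X : Fin (B + 1) → Ω → 𝒳)
    (hmeas : ∀ i, Measurable (fun ω => (θ i ω, X i ω)))
    (hindep : iIndepFun (fun i ω => (θ i ω, X i ω)) P)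
    (hident : ∀ i, P.map (fun ω => (θ i ω, X i ω)) =
      P.map (fun ω => (θ (Fin.last B) ω, X (Fin.last B) ω)))
    (A : Fin J → Set 𝒳) (hAmeas : ∀ j, MeasurableSet (A j))
    (s : 𝒯 → 𝒳 → ℝ) (hs : Measurable (fun p : 𝒯 × 𝒳 => s p.1 p.2)) :
    ∀ j : Fin J, 0 < P {ω | X (Fin.last B) ω ∈ A j} →
      1 - α ≤
        ((P[|{ω | X (Fin.last B) ω ∈ A j}])
          {ω | (s (θ (Fin.last B) ω) (X (Fin.last B) ω) : EReal) ≤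
            localThreshold (fun i : Fin B => θ i.castSucc)
              (fun i : Fin B => X i.castSucc) s (A j) α ω}).toReal := by
  intro j hj
  set Y : Ω → 𝒯 × 𝒳 := fun ω => (θ (Fin.last B) ω, X (Fin.last B) ω)
  set Z : Ω → Fin (B + 1) → 𝒯 × 𝒳 := fun ω i => (θ i ω, X i ω)
  have := Measure.isProbabilityMeasure_map (μ := P) (hmeas (Fin.last B)).aemeasurable
  have hC : MeasurableSet (Prod.snd ⁻¹' A j : Set (𝒯 × 𝒳)) := measurable_snd (hAmeas j)
  have hlaw : P.map Z = Measure.pi fun _ => P.map Y := by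
    rw [hindep.map_fun_eq_pi_map fun i => (hmeas i).aemeasurable]
    simp_rw [hident]
  have hevent : {ω | X (Fin.last B) ω ∈ A j} ∩ {ω | (s (Y ω).1 (Y ω).2 : EReal) ≤
      localThreshold (fun i : Fin B => θ i.castSucc) (fun i : Fin B => X i.castSucc) s (A j) α
        ω} =
      Z ⁻¹' cellCoverageEvent (Prod.snd ⁻¹' A j) (fun p => s p.1 p.2) α (Fin.last B) := by
    ext ω
    rw [Set.mem_preimage, mem_cellCoverageEvent_last_iff]
    exact and_congr Iff.rfl (coe_le_localThreshold_iff _ _ _ _ _ _ _)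
  refine le_toReal_cond_of_ofReal_mul_le (E := {ω | X (Fin.last B) ω ∈ A j}) (hmeas _ hC)
    hj.ne' ?_
  calc ENNReal.ofReal (1 - α) * P {ω | X (Fin.last B) ω ∈ A j}
      = ENNReal.ofReal (1 - α) * P.map Y (Prod.snd ⁻¹' A j) := by
        rw [Measure.map_apply (hmeas _) hC]; rfl
    _ ≤ Measure.pi (fun _ => P.map Y)
          (cellCoverageEvent (Prod.snd ⁻¹' A j) (fun p => s p.1 p.2) α (Fin.last B)) :=
        ofReal_mul_le_pi_cellCoverageEvent _ hC hs hα.1.le _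
    _ = _ := by
        rw [hevent, ← hlaw, Measure.map_apply (measurable_pi_lambda _ hmeas)
          (measurableSet_cellCoverageEvent hC hs α _)]

/-- **Local (Mondrian/LoCart-style) conformal coverage.** With a fixed measurable
partition `A 1, …, A J` of the feature space and i.i.d. calibration and test pairs,
the locally conformalized credible set achieves `1 - α` coverage conditionally on
the cell containing the test feature. -/
theorem local_conformal_coverage
    {Ω 𝒯 𝒳 : Type*} [MeasurableSpace Ω] [MeasurableSpace 𝒯] [MeasurableSpace 𝒳]
    (P : Measure Ω) [IsProbabilityMeasure P]
    (B J : ℕ) (α : ℝ) (hα : α ∈ Set.Ioo (0 : ℝ) 1)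
    (θ : Fin (B + 1) → Ω → 𝒯) (X : Fin (B + 1) → Ω → 𝒳)
    (hmeas : ∀ i, Measurable (fun ω => (θ i ω, X i ω)))
    (hindep : iIndepFun (fun i ω => (θ i ω, X i ω)) P)
    (hident : ∀ i, P.map (fun ω => (θ i ω, X i ω)) =
      P.map (fun ω => (θ (Fin.last B) ω, X (Fin.last B) ω)))
    (A : Fin J → Set 𝒳) (hAmeas : ∀ j, MeasurableSet (A j))
    (hAdisj : Pairwise (Function.onFun Disjoint A))
    (hAcover : (⋃ j, A j) = Set.univ)
    (s : 𝒯 → 𝒳 → ℝ) (hs : Measurable (fun p : 𝒯 × 𝒳 => s p.1 p.2)) :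
    ∀ j : Fin J, 0 < P {ω | X (Fin.last B) ω ∈ A j} →
      1 - α ≤
        ((P[|{ω | X (Fin.last B) ω ∈ A j}])
          {ω | (s (θ (Fin.last B) ω) (X (Fin.last B) ω) : EReal) ≤
            localThreshold (fun i : Fin B => θ i.castSucc)
              (fun i : Fin B => X i.castSucc) s (A j) α ω}).toReal :=
  local_conformal_coverage_general P B J α hα θ X hmeas hindep hident A hAmeas s hs
end
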